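/- Let n ≥ 2 and let 𝔤 be a Lie subalgebra of gl(n+1, ℝ) (closed under the matrix commutator) such that 𝔨 ⊆ 𝔤, such that 𝔤 is invariant under conjugation by [[R, 0], [0, 1]] for every R ∈ O(n), and such that 𝔤 ∩ 𝔪₀ = {0}. Then for every element [[0, b], [cᵀ, 0]] of 𝔤 (with b, c ∈ ℝⁿ), the vectors b and c are collinear, i.e. ‖b‖²‖c‖² = (bᵀc)². -/

import Mathlib

open Matrix

attribute [local instance 100] LieRing.ofAssociativeRing

noncomputable section

abbrev Idx (n : ℕ) := Fin n ⊕ Unit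

/-- 𝔨 = { [[A,0],[0,0]] : A skew-symmetric } -/
def kSet (n : ℕ) : Set (Matrix (Idx n) (Idx n) ℝ) :=
  { m | ∃ A : Matrix (Fin n) (Fin n) ℝ, Aᵀ = -A ∧ m = fromBlocks A 0 0 0 }

/-- 𝔪₀ = { [[λ·Iₙ,0],[0,μ]] } -/
def m0Set (n : ℕ) : Set (Matrix (Idx n) (Idx n) ℝ) :=
  { m | ∃ l μ : ℝ,
      m = fromBlocks (l • (1 : Matrix (Fin n) (Fin n) ℝ)) 0 0
        (μ • (1 : Matrix Unit Unit ℝ)) }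

/-!
For `Z = [[0, b], [cᵀ, 0]] ∈ 𝔤` the skew matrix `K = b cᵀ - c bᵀ` lies in `𝔨 ⊆ 𝔤`, so
`⁅Z, ⁅K, Z⁆⁆ = [[X, 0], [0, 2 cᵀ K b]] ∈ 𝔤` for some `X`, and `cᵀ K b = (bᵀc)² - ‖b‖²‖c‖²`.
Averaging the conjugates of a block-diagonal `[[X, 0], [0, μ]] ∈ 𝔤` over the finite orthogonal
group of signed cyclic shifts of the coordinates gives `[[(tr X / n) Iₙ, 0], [0, μ]]`, an element
of `𝔤 ∩ 𝔪₀ = {0}`; hence `μ = 0`.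
-/

theorem sum_intUnits_mul_eq_zero_of_ne {ι : Type*} [Fintype ι] [DecidableEq ι] {i j : ι}
    (h : i ≠ j) : ∑ s : ι → ℤˣ, ((s i * s j : ℤˣ) : ℤ) = 0 := by
  let g : ι → ℤˣ := Pi.mulSingle i (-1)
  have hflip (s : ι → ℤˣ) : (g * s) i * (g * s) j = -(s i * s j) := by
    simp [g, Pi.mulSingle_eq_of_ne h.symm]
  have := Equiv.sum_comp (Equiv.mulLeft g) fun s : ι → ℤˣ => ((s i * s j : ℤˣ) : ℤ)
  simp only [Equiv.coe_mulLeft, hflip, Units.val_neg, Finset.sum_neg_distrib] at this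
  omega

namespace Matrix

theorem fromBlocks_sum {R ι m o α : Type*} [AddCommMonoid R] (s : Finset α)
    (A : α → Matrix ι m R) (B : α → Matrix ι o R) (C : α → Matrix o m R)
    (D : α → Matrix o o R) :
    ∑ a ∈ s, fromBlocks (A a) (B a) (C a) (D a) =
      fromBlocks (∑ a ∈ s, A a) (∑ a ∈ s, B a) (∑ a ∈ s, C a) (∑ a ∈ s, D a) := by
  ext (i | i) (j | j) <;> simp [sum_apply]

section Vectors

variable {R m : Type*} [Fintype m] [CommRing R]

theorem replicateRow_mul_mul_replicateCol_apply {n ι κ : Type*} [Fintype n] (u : m → R)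
    (A : Matrix m n R) (v : n → R) (i : ι) (j : κ) :
    (replicateRow ι u * A * replicateCol κ v) i j = u ⬝ᵥ (A *ᵥ v) := by
  rw [Matrix.mul_assoc, ← replicateCol_mulVec]
  rfl

theorem dotProduct_mulVec_vecMulVec_sub_vecMulVec (b c : m → R) :
    c ⬝ᵥ ((vecMulVec b c - vecMulVec c b) *ᵥ b) = (b ⬝ᵥ c) ^ 2 - (b ⬝ᵥ b) * (c ⬝ᵥ c) := by
  simp [sub_mulVec, vecMulVec_mulVec, dotProduct_sub, dotProduct_smul, dotProduct_comm]
  ring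

end Vectors

section SignedShifts

variable {R ι : Type*} [Fintype ι] [DecidableEq ι] [CommRing R]

theorem transpose_diagonal_intUnits_mul_self (s : ι → ℤˣ) :
    (diagonal fun i => ((s i : ℤ) : R))ᵀ * diagonal (fun i => ((s i : ℤ) : R)) = 1 := by
  rw [diagonal_transpose, diagonal_mul_diagonal, ← diagonal_one]
  congr 1
  ext i
  rw [← Int.cast_mul, ← Units.val_mul, Int.units_mul_self]
  simp

theorem sum_diagonal_intUnits_mul_mul (X : Matrix ι ι R) :
    ∑ s : ι → ℤˣ, diagonal (fun i => ((s i : ℤ) : R)) * X * diagonal (fun i => ((s i : ℤ) : R)) =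
      Fintype.card (ι → ℤˣ) • diagonal X.diag := by
  ext i j
  simp only [sum_apply, diagonal_mul, mul_diagonal, smul_apply, diagonal_apply]
  by_cases hij : i = j
  · subst hij
    have hsq (u : ℤˣ) : ((u : ℤ) : R) * X i i * ((u : ℤ) : R) = X i i := by
      rw [mul_comm, ← mul_assoc, ← Int.cast_mul, ← Units.val_mul, Int.units_mul_self]
      simp
    simp [hsq]
  · have hsum := congrArg (Int.cast : ℤ → R) (sum_intUnits_mul_eq_zero_of_ne hij)
    push_cast at hsum
    calc ∑ s : ι → ℤˣ, ((s i : ℤ) : R) * X i j * ((s j : ℤ) : R)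
        = (∑ s : ι → ℤˣ, ((s i : ℤ) : R) * ((s j : ℤ) : R)) * X i j := by
          rw [Finset.sum_mul]; exact Finset.sum_congr rfl fun s _ => by ring
      _ = _ := by simp [hsum, hij]

theorem transpose_permMatrix_mul_self (σ : Equiv.Perm ι) :
    (σ.permMatrix R)ᵀ * σ.permMatrix R = 1 := by
  rw [transpose_permMatrix, ← permMatrix_mul, mul_inv_cancel, permMatrix_one]

theorem permMatrix_mul_mul_transpose (σ : Equiv.Perm ι) (X : Matrix ι ι R) :
    σ.permMatrix R * X * (σ.permMatrix R)ᵀ = X.submatrix σ σ := by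
  rw [transpose_permMatrix, PEquiv.toMatrix_toPEquiv_mul, PEquiv.mul_toMatrix_toPEquiv]
  rfl

theorem sum_submatrix_subRight_diagonal [AddGroup ι] (d : ι → R) :
    ∑ k : ι, (diagonal d).submatrix (Equiv.subRight k) (Equiv.subRight k) = (∑ i, d i) • 1 := by
  simp only [submatrix_diagonal_equiv, smul_one_eq_diagonal]
  ext i j
  simp only [sum_apply, diagonal_apply]
  split_ifs
  · exact (Equiv.subLeft i).sum_comp d
  · simp

end SignedShifts

section Blocks

variable {R m o : Type*} [Fintype m] [DecidableEq m] [Fintype o] [DecidableEq o] [CommRing R]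

theorem lie_fromBlocks_offDiag_lie_fromBlocks_diag (A : Matrix m m R) (B : Matrix m o R)
    (C : Matrix o m R) :
    ⁅(fromBlocks 0 B C 0 : Matrix (m ⊕ o) (m ⊕ o) R),
      ⁅(fromBlocks A 0 0 0 : Matrix (m ⊕ o) (m ⊕ o) R), fromBlocks 0 B C 0⁆⁆ =
      fromBlocks (-(B * C * A) - A * B * C) 0 0 (2 • (C * A * B)) := by
  simp only [Ring.lie_def, sub_eq_add_neg, fromBlocks_neg, fromBlocks_multiply, fromBlocks_add]
  simp [Matrix.mul_assoc, two_smul]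

theorem fromBlocks_mul_fromBlocks_mul_inv (U : Matrix m m R) (hU : Uᵀ * U = 1)
    (X : Matrix m m R) (D : Matrix o o R) :
    fromBlocks U 0 0 1 * fromBlocks X 0 0 D * (fromBlocks U 0 0 1)⁻¹ =
      fromBlocks (U * X * Uᵀ) 0 0 D := by
  have hinv : (fromBlocks U 0 0 1 : Matrix (m ⊕ o) (m ⊕ o) R)⁻¹ = fromBlocks Uᵀ 0 0 1 :=
    inv_eq_right_inv (by simp [fromBlocks_multiply, mul_eq_one_comm.mp hU])
  simp [hinv, fromBlocks_multiply]

end Blocks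

section Averaging

variable {𝕜 ι o : Type*} [Field 𝕜] [CharZero 𝕜] [Fintype ι] [DecidableEq ι]

def OrthConjStable (S : Submodule 𝕜 (Matrix (ι ⊕ o) (ι ⊕ o) 𝕜)) : Prop :=
  ∀ U : Matrix ι ι 𝕜, Uᵀ * U = 1 → ∀ X D, fromBlocks X 0 0 D ∈ S → fromBlocks (U * X * Uᵀ) 0 0 D ∈ S

variable {S : Submodule 𝕜 (Matrix (ι ⊕ o) (ι ⊕ o) 𝕜)}

theorem OrthConjStable.fromBlocks_diagonal_diag_mem (hS : OrthConjStable S)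
    {X : Matrix ι ι 𝕜} {D : Matrix o o 𝕜} (h : fromBlocks X 0 0 D ∈ S) :
    fromBlocks (diagonal X.diag) 0 0 D ∈ S := by
  have hsum : ∑ s : ι → ℤˣ, fromBlocks (diagonal (fun i => ((s i : ℤ) : 𝕜)) * X *
      (diagonal fun i => ((s i : ℤ) : 𝕜))ᵀ) 0 0 D ∈ S :=
    S.sum_mem fun s _ => hS _ (transpose_diagonal_intUnits_mul_self s) X D h
  simp only [fromBlocks_sum, diagonal_transpose, sum_diagonal_intUnits_mul_mul, Finset.sum_const,
    Finset.card_univ, ← Nat.cast_smul_eq_nsmul 𝕜] at hsum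
  rwa [← fromBlocks_smul, Submodule.smul_mem_iff _ (by simp)] at hsum

theorem OrthConjStable.fromBlocks_smul_one_mem [AddGroup ι] [Nonempty ι] (hS : OrthConjStable S)
    {d : ι → 𝕜} {D : Matrix o o 𝕜} (h : fromBlocks (diagonal d) 0 0 D ∈ S) :
    fromBlocks (((Fintype.card ι : 𝕜)⁻¹ * ∑ i, d i) • 1) 0 0 D ∈ S := by
  have hsum : ∑ k : ι, fromBlocks (Equiv.Perm.permMatrix 𝕜 (Equiv.subRight k) * diagonal d *
      (Equiv.Perm.permMatrix 𝕜 (Equiv.subRight k))ᵀ) 0 0 D ∈ S :=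
    S.sum_mem fun k _ => hS _ (transpose_permMatrix_mul_self _) _ D h
  simp only [permMatrix_mul_mul_transpose, fromBlocks_sum, sum_submatrix_subRight_diagonal,
    Finset.sum_const, Finset.card_univ, ← Nat.cast_smul_eq_nsmul 𝕜] at hsum
  have hcard : (Fintype.card ι : 𝕜) ≠ 0 := Nat.cast_ne_zero.mpr Fintype.card_ne_zero
  rwa [← Submodule.smul_mem_iff _ hcard, fromBlocks_smul, smul_smul,
    mul_inv_cancel_left₀ hcard]

end Averaging

theorem OrthConjStable.eq_zero_of_fromBlocks_mem {n : ℕ} [NeZero n]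
    {S : Submodule ℝ (Matrix (Idx n) (Idx n) ℝ)} (hS : OrthConjStable S)
    (hm0 : (S : Set (Matrix (Idx n) (Idx n) ℝ)) ∩ m0Set n = {0})
    {X : Matrix (Fin n) (Fin n) ℝ} {μ : Matrix Unit Unit ℝ} (h : fromBlocks X 0 0 μ ∈ S) :
    μ = 0 := by
  have hμ : μ = μ () () • 1 := by ext ⟨⟩ ⟨⟩; simp
  have hscalar := hS.fromBlocks_smul_one_mem (hS.fromBlocks_diagonal_diag_mem h)
  have hmem : _ ∈ (S : Set _) ∩ m0Set n := ⟨hscalar, _, μ () (), by rw [← hμ]⟩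
  rw [hm0, Set.mem_singleton_iff, ← fromBlocks_zero, fromBlocks_inj] at hmem
  exact hmem.2.2.2

end Matrix

theorem stmt5 (n : ℕ) (hn : 2 ≤ n)
    (𝔤 : LieSubalgebra ℝ (Matrix (Idx n) (Idx n) ℝ))
    (hk : kSet n ⊆ (𝔤 : Set (Matrix (Idx n) (Idx n) ℝ)))
    (hinv : ∀ R : Matrix (Fin n) (Fin n) ℝ, Rᵀ * R = 1 →
      ∀ Z ∈ 𝔤, (fromBlocks R 0 0 (1 : Matrix Unit Unit ℝ)) * Z *
        (fromBlocks R 0 0 (1 : Matrix Unit Unit ℝ))⁻¹ ∈ 𝔤)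
    (hm0 : (𝔤 : Set (Matrix (Idx n) (Idx n) ℝ)) ∩ m0Set n = {0}) :
    ∀ b c : Fin n → ℝ,
      fromBlocks 0 (replicateCol Unit b) (replicateRow Unit c) 0 ∈ 𝔤 →
      (∑ i, b i ^ 2) * (∑ i, c i ^ 2) = (∑ i, b i * c i) ^ 2 := by
  have : NeZero n := ⟨by omega⟩
  intro b c hZ
  have hS : OrthConjStable 𝔤.toSubmodule := fun U hU X D h => by
    simpa [fromBlocks_mul_fromBlocks_mul_inv U hU] using hinv U hU _ h
  set K := vecMulVec b c - vecMulVec c b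
  have hK : fromBlocks K 0 0 0 ∈ 𝔤 := hk ⟨K, by simp [K, transpose_vecMulVec], rfl⟩
  have hT := 𝔤.lie_mem hZ (𝔤.lie_mem hK hZ)
  rw [lie_fromBlocks_offDiag_lie_fromBlocks_diag] at hT
  have hcorner := congr_fun₂ (hS.eq_zero_of_fromBlocks_mem hm0 hT) () ()
  rw [Matrix.smul_apply, replicateRow_mul_mul_replicateCol_apply,
    dotProduct_mulVec_vecMulVec_sub_vecMulVec] at hcorner
  simp only [dotProduct, Matrix.zero_apply, nsmul_eq_mul, Nat.cast_ofNat] at hcorner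
  simp only [sq]
  linear_combination -hcorner / 2
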